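/- arXiv:2207.03702 — 2 statements merged into one kernel-verified Lean document; each statement's English description precedes it below -/
import Mathlib

section
/- Let V be a meromorphic open-string vertex algebra, W_1, W_2 left V-modules, and F^{(1)}, F^{(2)}: V → H_N(W_1,W_2) two derivations that differ by an inner derivation. Then the extensions U^{(1)} and U^{(2)} of W_1 by W_2 constructed from F^{(1)} and F^{(2)} (with U^{(i)} = W_2 ⊞ W_1 and Y_{U^{(i)}}(v,x)(w_2,w_1) = (Y_{W_2}(v,x)w_2 + F^{(i)}(v,x)w_1, Y_{W_1}(v,x)w_1)) are equivalent extensions; explicitly, if F^{(1)}(v,ζ) − F^{(2)}(v,ζ) = Y_{W_2}(v,ζ)φ_{-1} − φ_{-1}Y_{W_1}(v,ζ) then T(w_2,w_1) = (w_2 + φ_{-1}(w_1), w_1) is a V-module isomorphism U^{(1)} → U^{(2)} commuting with the two exact sequences. -/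
open scoped BigOperators

noncomputable section

/-- Generalized binomial coefficient `C(a, n)` with integer upper argument, valued in `ℂ`. -/
def zchoose (a : ℤ) (n : ℕ) : ℂ :=
  (∏ i ∈ Finset.range n, ((a : ℂ) - (i : ℂ))) / (n.factorial : ℂ)

/-- A meromorphic open-string vertex algebra (MOSVA), presented through the modes
`Y u v n` (the coefficient of `x^{-n-1}` in `Y(u,x)v`).  All the axioms of
Definition 2.1 of the paper are encoded at the level of coefficients of the formal
variables; in particular weak associativity with the pole-order condition is the
coefficient form of
`(x₀+x₂)^p Y(u,x₀+x₂)Y(v,x₂)w = (x₀+x₂)^p Y(Y(u,x₀)v,x₂)w`. -/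
structure MOSVA (V : Type) [AddCommGroup V] [Module ℂ V] : Type where
  Y : V → V → ℤ → V
  vac : V
  dV : V → V
  DV : V → V
  grading : ℤ → Submodule ℂ V
  Y_add_left : ∀ (u u' v : V) (n : ℤ), Y (u + u') v n = Y u v n + Y u' v n
  Y_smul_left : ∀ (c : ℂ) (u v : V) (n : ℤ), Y (c • u) v n = c • Y u v n
  Y_add_right : ∀ (u v v' : V) (n : ℤ), Y u (v + v') n = Y u v n + Y u v' n
  Y_smul_right : ∀ (c : ℂ) (u v : V) (n : ℤ), Y u (c • v) n = c • Y u v n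
  d_linear : IsLinearMap ℂ dV
  D_linear : IsLinearMap ℂ DV
  grading_indep : ∀ n : ℤ, Disjoint (grading n) (⨆ (m : ℤ) (_ : m ≠ n), grading m)
  grading_sup : (⨆ n : ℤ, grading n) = ⊤
  lower_bound : ∃ K : ℤ, ∀ n : ℤ, n < K → grading n = ⊥
  d_eigen : ∀ n : ℤ, ∀ v ∈ grading n, dV v = (n : ℂ) • v
  trunc : ∀ u v : V, ∃ K : ℤ, ∀ n : ℤ, K ≤ n → Y u v n = 0
  identity : ∀ (v : V) (n : ℤ), Y vac v n = if n = -1 then v else 0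
  creation : ∀ (u : V) (n : ℤ), 0 ≤ n → Y u vac n = 0
  creation_const : ∀ u : V, Y u vac (-1) = u
  d_comm : ∀ (u v : V) (n : ℤ),
    dV (Y u v n) = Y (dV u) v n + Y u (dV v) n - ((n + 1 : ℤ) : ℂ) • Y u v n
  D_deriv : ∀ (u v : V) (n : ℤ), Y (DV u) v n = (-(n : ℂ)) • Y u v (n - 1)
  D_comm : ∀ (u v : V) (n : ℤ),
    DV (Y u v n) - Y u (DV v) n = (-(n : ℂ)) • Y u v (n - 1)
  weak_assoc : ∀ u w : V, ∃ p : ℕ, ∀ (v : V) (a b : ℤ),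
    (∑ᶠ i : ℕ, zchoose (a + (i : ℤ)) i • Y u (Y v w ((i : ℤ) - b - 1)) ((p : ℤ) - a - (i : ℤ) - 1)) =
      ∑ i ∈ Finset.range (p + 1),
        ((p.choose i : ℕ) : ℂ) • Y (Y u v ((p : ℤ) - (i : ℤ) - a - 1)) w ((i : ℤ) - b - 1)

/-- The data of a left module for a MOSVA: the modes of the vertex operator map,
the grading operator `dW`, the operator `DW`, and the `ℂ`-grading. -/
structure LModData (V : Type) (W : Type) [AddCommGroup V] [Module ℂ V]
    [AddCommGroup W] [Module ℂ W] : Type where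
  Y : V → W → ℤ → W
  dW : W → W
  DW : W → W
  grading : ℂ → Submodule ℂ W

/-- The axioms making the data `d` into a left module for the MOSVA `A`
(Definition 2.3 of the paper, encoded at the level of coefficients). -/
structure IsLMod {V W : Type} [AddCommGroup V] [Module ℂ V] [AddCommGroup W] [Module ℂ W]
    (A : MOSVA V) (d : LModData V W) : Prop where
  Y_add_left : ∀ (u u' : V) (w : W) (n : ℤ), d.Y (u + u') w n = d.Y u w n + d.Y u' w n
  Y_smul_left : ∀ (c : ℂ) (u : V) (w : W) (n : ℤ), d.Y (c • u) w n = c • d.Y u w n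
  Y_add_right : ∀ (u : V) (w w' : W) (n : ℤ), d.Y u (w + w') n = d.Y u w n + d.Y u w' n
  Y_smul_right : ∀ (c : ℂ) (u : V) (w : W) (n : ℤ), d.Y u (c • w) n = c • d.Y u w n
  d_linear : IsLinearMap ℂ d.dW
  D_linear : IsLinearMap ℂ d.DW
  grading_indep : ∀ m : ℂ, Disjoint (d.grading m) (⨆ (m' : ℂ) (_ : m' ≠ m), d.grading m')
  grading_sup : (⨆ m : ℂ, d.grading m) = ⊤
  lower_bound : ∃ K : ℝ, ∀ m : ℂ, m.re < K → d.grading m = ⊥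
  d_eigen : ∀ m : ℂ, ∀ w ∈ d.grading m, d.dW w = m • w
  D_wt : ∀ m : ℂ, ∀ w ∈ d.grading m, d.DW w ∈ d.grading (m + 1)
  trunc : ∀ (v : V) (w : W), ∃ K : ℤ, ∀ n : ℤ, K ≤ n → d.Y v w n = 0
  identity : ∀ (w : W) (n : ℤ), d.Y A.vac w n = if n = -1 then w else 0
  d_comm : ∀ (v : V) (w : W) (n : ℤ),
    d.dW (d.Y v w n) = d.Y (A.dV v) w n + d.Y v (d.dW w) n - ((n + 1 : ℤ) : ℂ) • d.Y v w n
  D_deriv : ∀ (v : V) (w : W) (n : ℤ), d.Y (A.DV v) w n = (-(n : ℂ)) • d.Y v w (n - 1)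
  D_comm : ∀ (v : V) (w : W) (n : ℤ),
    d.DW (d.Y v w n) - d.Y v (d.DW w) n = (-(n : ℂ)) • d.Y v w (n - 1)
  weak_assoc : ∀ (v₁ : V) (w : W), ∃ p : ℕ, ∀ (v₂ : V) (a b : ℤ),
    (∑ᶠ i : ℕ, zchoose (a + (i : ℤ)) i •
        d.Y v₁ (d.Y v₂ w ((i : ℤ) - b - 1)) ((p : ℤ) - a - (i : ℤ) - 1)) =
      ∑ i ∈ Finset.range (p + 1),
        ((p.choose i : ℕ) : ℂ) • d.Y (A.Y v₁ v₂ ((p : ℤ) - (i : ℤ) - a - 1)) w ((i : ℤ) - b - 1)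

/-- A left module for a MOSVA: data together with the module axioms. -/
structure LMod {V : Type} [AddCommGroup V] [Module ℂ V] (A : MOSVA V)
    (W : Type) [AddCommGroup W] [Module ℂ W] extends LModData V W : Type where
  prop : IsLMod A toLModData

/-- A homomorphism of left `V`-modules: a linear map commuting with `d`, `D`, and
all vertex operators. -/
def IsHomData {V W W' : Type} [AddCommGroup V] [Module ℂ V] [AddCommGroup W] [Module ℂ W]
    [AddCommGroup W'] [Module ℂ W'] (_ : MOSVA V) (d : LModData V W) (d' : LModData V W')
    (f : W → W') : Prop :=
  IsLinearMap ℂ f ∧ (∀ w, f (d.dW w) = d'.dW (f w)) ∧ (∀ w, f (d.DW w) = d'.DW (f w)) ∧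
    ∀ (v : V) (w : W) (n : ℤ), f (d.Y v w n) = d'.Y v (f w) n

/-- The candidate left-module structure on the subspace `S = ψ(W₁)` of an extension:
vertex operators `π₁ Y_U`, grading operator `d_U|_S`, operator `π₁ D_U|_S`, where
`π₁` is the projection onto `S` along `W₂`. -/
def rangeData {V W : Type} [AddCommGroup V] [Module ℂ V] [AddCommGroup W] [Module ℂ W]
    (_ : MOSVA V) (dU : LModData V W) (S W2r : Submodule ℂ W) (hc : IsCompl S W2r)
    (hdS : ∀ u ∈ S, dU.dW u ∈ S) : LModData V ↥S where
  Y v s n := Submodule.linearProjOfIsCompl S W2r hc (dU.Y v (↑s) n)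
  dW s := ⟨dU.dW ↑s, hdS _ s.2⟩
  DW s := Submodule.linearProjOfIsCompl S W2r hc (dU.DW ↑s)
  grading m := (dU.grading m).comap S.subtype

/-- Coefficient families: an element `φ` of `H_N(W₁,W₂)` is recorded through the
coefficients `φ k : W₁ → W₂` of `ζ^k` in `φ(ζ)w₁`. -/
abbrev HNFam (W1 W2 : Type) := ℤ → W1 → W2

/-- Membership in the graded (restricted) dual `W'` of a graded module. -/
def InGDual {V W : Type} [AddCommGroup V] [Module ℂ V] [AddCommGroup W] [Module ℂ W]
    (d : LModData V W) (w' : W → ℂ) : Prop :=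
  IsLinearMap ℂ w' ∧ ∃ s : Finset ℂ, ∀ μ : ℂ, μ ∉ s → ∀ w ∈ d.grading μ, w' w = 0

/-- Iterated application of modes of vertex operators:
`Y(v 0)_{m 0} Y(v 1)_{m 1} ⋯ Y(v (l-1))_{m (l-1)} w`. -/
def modesApply {V W : Type} [AddCommGroup V] [Module ℂ V] [AddCommGroup W] [Module ℂ W]
    (d : LModData V W) (l : ℕ) (v : Fin l → V) (m : Fin l → ℤ) (w : W) : W :=
  (List.finRange l).foldr (fun i acc => d.Y (v i) acc (m i)) w

/-- The general term of the series
`⟨w₂', Y_{W₂}(v₁,z₁)⋯Y_{W₂}(v_k,z_k) φ(ζ) Y_{W₁}(v_{k+1},z_{k+1})⋯Y_{W₁}(v_{k+l},z_{k+l}) w₁⟩`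
appearing in the composability condition for `H_N(W₁,W₂)`. -/
def HNterm {V W1 W2 : Type} [AddCommGroup V] [Module ℂ V] [AddCommGroup W1] [Module ℂ W1]
    [AddCommGroup W2] [Module ℂ W2] (d1 : LModData V W1) (d2 : LModData V W2)
    (φ : HNFam W1 W2) (k l : ℕ) (v : Fin (k + l) → V) (w1 : W1) (w2' : W2 → ℂ)
    (z : Fin (k + l) → ℂ) (ζ : ℂ) (q : (Fin (k + l) → ℤ) × ℤ) : ℂ :=
  w2' (modesApply d2 k (fun i => v (Fin.castAdd l i)) (fun i => q.1 (Fin.castAdd l i))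
      (φ q.2 (modesApply d1 l (fun j => v (Fin.natAdd k j)) (fun j => q.1 (Fin.natAdd k j)) w1)))
    * (∏ i, z i ^ (-q.1 i - 1)) * ζ ^ q.2

/-- The region `|z₁| > ⋯ > |z_k| > |ζ| > |z_{k+1}| > ⋯ > |z_{k+l}| > 0`. -/
def Region1 (k l : ℕ) (z : Fin (k + l) → ℂ) (ζ : ℂ) : Prop :=
  (∀ i j : Fin (k + l), i < j → ‖z j‖ < ‖z i‖) ∧
  (∀ i : Fin (k + l), (i : ℕ) < k → ‖ζ‖ < ‖z i‖) ∧
  (∀ i : Fin (k + l), k ≤ (i : ℕ) → ‖z i‖ < ‖ζ‖) ∧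
  (∀ i, z i ≠ 0) ∧ ζ ≠ 0

/-- The last index among `z₁, …, z_{k+l}`. -/
def lastIdx (k l : ℕ) (h : 1 ≤ k + l) : Fin (k + l) := ⟨k + l - 1, by omega⟩

/-- The region
`|z_{k+l}| > |z₁-z_{k+l}| > ⋯ > |z_k - z_{k+l}| > |ζ-z_{k+l}| > |z_{k+1}-z_{k+l}| > ⋯ > 0`
used in the `N`-weight-degree condition. -/
def Region2 {k l : ℕ} (h : 1 ≤ k + l) (z : Fin (k + l) → ℂ) (ζ : ℂ) : Prop :=
  (∀ i, i ≠ lastIdx k l h → ‖z i - z (lastIdx k l h)‖ < ‖z (lastIdx k l h)‖) ∧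
  ‖ζ - z (lastIdx k l h)‖ < ‖z (lastIdx k l h)‖ ∧
  (∀ i j : Fin (k + l), i < j → j ≠ lastIdx k l h →
    ‖z j - z (lastIdx k l h)‖ < ‖z i - z (lastIdx k l h)‖) ∧
  (∀ i : Fin (k + l), (i : ℕ) < k → ‖ζ - z (lastIdx k l h)‖ < ‖z i - z (lastIdx k l h)‖) ∧
  (∀ i : Fin (k + l), k ≤ (i : ℕ) → i ≠ lastIdx k l h →
    ‖z i - z (lastIdx k l h)‖ < ‖ζ - z (lastIdx k l h)‖) ∧
  (∀ i, i ≠ lastIdx k l h → z i - z (lastIdx k l h) ≠ 0) ∧ ζ - z (lastIdx k l h) ≠ 0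

/-- The product `ζ^m ∏ z_i^{r_i} ∏_{i<j} (z_i-z_j)^{p_{ij}} ∏ (z_i-ζ)^{s_i}`
clearing all possible poles. -/
def HNdenom (k l : ℕ) (m : ℕ) (r : Fin (k + l) → ℕ) (pp : Fin (k + l) → Fin (k + l) → ℕ)
    (s : Fin (k + l) → ℕ) (z : Fin (k + l) → ℂ) (ζ : ℂ) : ℂ :=
  ζ ^ m * (∏ i, z i ^ r i) * (∏ i, ∏ j, if i < j then (z i - z j) ^ pp i j else 1) *
    (∏ i, (z i - ζ) ^ s i)

/-- A homogeneous element of the bimodule `H_N(W₁,W₂)` of weight `n`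
(Proposition-Definition 2.15 of the paper): a family of linear coefficient maps
satisfying the `D`-derivative property, the `d`-conjugation (weight) property,
the composability condition, and the `N`-weight-degree condition.  The rational
functions appearing in the composability condition are encoded through a polynomial
numerator `g` and the pole-clearing denominator `HNdenom`, with the pole orders
depending only on the prescribed pairs; the `N`-weight-degree condition is encoded
through the expansion around `z_{k+l}` with total-degree lower bound. -/
structure IsHNhomog {V W1 W2 : Type} [AddCommGroup V] [Module ℂ V] [AddCommGroup W1]
    [Module ℂ W1] [AddCommGroup W2] [Module ℂ W2] (A : MOSVA V) (d1 : LModData V W1)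
    (d2 : LModData V W2) (N : ℤ) (n : ℤ) (φ : HNFam W1 W2) : Prop where
  lin : ∀ k : ℤ, IsLinearMap ℂ (φ k)
  pole_finite : ∀ w1 : W1, ∃ K : ℤ, ∀ k : ℤ, k < K → φ k w1 = 0
  D_prop : ∀ (k : ℤ) (w1 : W1),
    ((k + 1 : ℤ) : ℂ) • φ (k + 1) w1 = d2.DW (φ k w1) - φ k (d1.DW w1)
  wt_mem : ∀ (μ : ℂ) (w1 : W1), w1 ∈ d1.grading μ → ∀ k : ℤ,
    φ k w1 ∈ d2.grading (μ + (n : ℂ) + (k : ℂ))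
  comp : ∃ (r : V → W1 → ℕ) (mφ : W1 → ℕ) (pp : V → V → ℕ) (ss : V → ℕ),
    ∀ (k l : ℕ) (v : Fin (k + l) → V) (w1 : W1) (w2' : W2 → ℂ), InGDual d2 w2' →
    ∃ g : MvPolynomial (Fin (k + l) ⊕ Unit) ℂ,
      (∀ (z : Fin (k + l) → ℂ) (ζ : ℂ), Region1 k l z ζ →
        Summable (HNterm d1 d2 φ k l v w1 w2' z ζ) ∧
        (∑' q : (Fin (k + l) → ℤ) × ℤ, HNterm d1 d2 φ k l v w1 w2' z ζ q) *
            HNdenom k l (mφ w1) (fun i => r (v i) w1) (fun i j => pp (v i) (v j))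
              (fun i => ss (v i)) z ζ
          = MvPolynomial.eval (Sum.elim z fun _ => ζ) g) ∧
      (∀ wtv : Fin (k + l) → ℤ, (∀ i, v i ∈ A.grading (wtv i)) → ∀ h1 : 1 ≤ k + l,
        ∃ c : ((Fin (k + l) → ℤ) × ℤ) → ℂ,
          (∀ q : (Fin (k + l) → ℤ) × ℤ, c q ≠ 0 →
            N - (∑ i, wtv i) - n ≤ (∑ i ∈ Finset.univ.erase (lastIdx k l h1), q.1 i) + q.2) ∧
          (∀ (dd : Fin (k + l) → ℤ) (e : ℤ),
            {t : ℤ | c (Function.update dd (lastIdx k l h1) t, e) ≠ 0}.Finite) ∧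
          (∀ (z : Fin (k + l) → ℂ) (ζ : ℂ), Region2 h1 z ζ →
            Summable (fun q : (Fin (k + l) → ℤ) × ℤ =>
              c q * (∏ i, (if i = lastIdx k l h1 then z i
                  else z i - z (lastIdx k l h1)) ^ q.1 i) *
                (ζ - z (lastIdx k l h1)) ^ q.2) ∧
            (∑' q : (Fin (k + l) → ℤ) × ℤ,
                c q * (∏ i, (if i = lastIdx k l h1 then z i
                    else z i - z (lastIdx k l h1)) ^ q.1 i) *
                  (ζ - z (lastIdx k l h1)) ^ q.2) *
              HNdenom k l (mφ w1) (fun i => r (v i) w1) (fun i j => pp (v i) (v j))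
                (fun i => ss (v i)) z ζ
            = MvPolynomial.eval (Sum.elim z fun _ => ζ) g))

/-- Membership in `H_N(W₁,W₂)`: a finite sum of homogeneous elements. -/
def IsHN {V W1 W2 : Type} [AddCommGroup V] [Module ℂ V] [AddCommGroup W1] [Module ℂ W1]
    [AddCommGroup W2] [Module ℂ W2] (A : MOSVA V) (d1 : LModData V W1)
    (d2 : LModData V W2) (N : ℤ) (φ : HNFam W1 W2) : Prop :=
  ∃ (s : Finset ℤ) (ψ : ℤ → HNFam W1 W2), (∀ n ∈ s, IsHNhomog A d1 d2 N n (ψ n)) ∧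
    ∀ (k : ℤ) (w1 : W1), φ k w1 = ∑ n ∈ s, ψ n k w1

/-- A rational function of two variables with the only possible poles at
`u = 0`, `w = 0`, `u = w`. -/
def Rat2 (F : ℂ → ℂ → ℂ) : Prop :=
  ∃ (g : MvPolynomial (Fin 2) ℂ) (p1 p2 p3 : ℕ),
    ∀ u w : ℂ, u ≠ 0 → w ≠ 0 → u ≠ w →
      F u w * (u ^ p1 * w ^ p2 * (u - w) ^ p3) = MvPolynomial.eval ![u, w] g

/-- `F : V → H_N(W₁,W₂)` is a derivation:
`F(Y(u,x)v) = Y_H^L(u,x)F(v) + e^{xD_H} Y_H^{s(R)}(v,-x)F(u)`.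
This is encoded through the pairings with the graded dual: for each `u, v, w₁, w₂'`
the series `⟨w₂', Y_{W₂}(u,z)F(v)(ζ)w₁⟩` and `⟨w₂', F(u)(z)Y_{W₁}(v,ζ)w₁⟩` converge in
their natural regions to rational functions `FL`, `FR` with the only possible poles at
`0` and at coinciding variables, and
`⟨w₂', F(Y(u,x)v)(ζ)w₁⟩ = FL(ζ+x,ζ) + FR(ζ+x,ζ)` for `|ζ| > |x| > 0`, which is the
rigorous meaning of the displayed identity of `H_N`-valued formal series. -/
def IsHNDeriv {V W1 W2 : Type} [AddCommGroup V] [Module ℂ V] [AddCommGroup W1]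
    [Module ℂ W1] [AddCommGroup W2] [Module ℂ W2] (A : MOSVA V) (d1 : LModData V W1)
    (d2 : LModData V W2) (F : V → HNFam W1 W2) : Prop :=
  (∀ (u u' : V) (k : ℤ) (w1 : W1), F (u + u') k w1 = F u k w1 + F u' k w1) ∧
  (∀ (c : ℂ) (u : V) (k : ℤ) (w1 : W1), F (c • u) k w1 = c • F u k w1) ∧
  (∀ (u v : V) (w1 : W1) (w2' : W2 → ℂ), InGDual d2 w2' →
    ∃ FL FR : ℂ → ℂ → ℂ, Rat2 FL ∧ Rat2 FR ∧
      (∀ zu zw : ℂ, ‖zw‖ < ‖zu‖ → zw ≠ 0 →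
        Summable (fun q : ℤ × ℤ =>
          w2' (d2.Y u (F v q.2 w1) q.1) * zu ^ (-q.1 - 1) * zw ^ q.2) ∧
        (∑' q : ℤ × ℤ, w2' (d2.Y u (F v q.2 w1) q.1) * zu ^ (-q.1 - 1) * zw ^ q.2)
          = FL zu zw) ∧
      (∀ zw zu : ℂ, ‖zu‖ < ‖zw‖ → zu ≠ 0 →
        Summable (fun q : ℤ × ℤ =>
          w2' (F u q.1 (d1.Y v w1 q.2)) * zw ^ q.1 * zu ^ (-q.2 - 1)) ∧
        (∑' q : ℤ × ℤ, w2' (F u q.1 (d1.Y v w1 q.2)) * zw ^ q.1 * zu ^ (-q.2 - 1))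
          = FR zw zu) ∧
      (∀ x ζ : ℂ, ‖x‖ < ‖ζ‖ → x ≠ 0 →
        Summable (fun q : ℤ × ℤ =>
          w2' (F (A.Y u v q.1) q.2 w1) * x ^ (-q.1 - 1) * ζ ^ q.2) ∧
        (∑' q : ℤ × ℤ, w2' (F (A.Y u v q.1) q.2 w1) * x ^ (-q.1 - 1) * ζ ^ q.2)
          = FL (ζ + x) ζ + FR (ζ + x) ζ))

/-- The inner derivation associated to a vacuum-like element `θ` of `H_N(W₁,W₂)`
(a constant `φ(ζ) = θ`), namely `v ↦ Y_{W₂}(v,ζ)θ - θ Y_{W₁}(v,ζ)`. -/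
def innerFam {V W1 W2 : Type} [AddCommGroup V] [Module ℂ V] [AddCommGroup W1]
    [Module ℂ W1] [AddCommGroup W2] [Module ℂ W2] (d1 : LModData V W1)
    (d2 : LModData V W2) (θ : W1 → W2) (v : V) : HNFam W1 W2 :=
  fun k w1 => d2.Y v (θ w1) (-k - 1) - θ (d1.Y v w1 (-k - 1))

/-- The element of `H_N(W₁,W₂)` given by the constant function `φ(ζ) = θ`. -/
def constFam {W1 W2 : Type} [AddCommGroup W2] (θ : W1 → W2) : HNFam W1 W2 :=
  fun k w1 => if k = 0 then θ w1 else 0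

/-- A derivation `V → H_N(W₁,W₂)` in the full sense: a grading-preserving linear
map whose values lie in `H_N(W₁,W₂)` and which satisfies the derivation identity. -/
def IsHNDerivFull {V W1 W2 : Type} [AddCommGroup V] [Module ℂ V] [AddCommGroup W1]
    [Module ℂ W1] [AddCommGroup W2] [Module ℂ W2] (A : MOSVA V) (d1 : LModData V W1)
    (d2 : LModData V W2) (N : ℤ) (F : V → HNFam W1 W2) : Prop :=
  (∀ nv : ℤ, ∀ v ∈ A.grading nv, IsHNhomog A d1 d2 N nv (F v)) ∧
  (∀ v : V, IsHN A d1 d2 N (F v)) ∧ IsHNDeriv A d1 d2 F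

/-- The candidate left-module structure on `U = W₂ ⊞ W₁` built from a derivation
`F : V → H_N(W₁,W₂)`:
`Y_U(v,x)(w₂,w₁) = (Y_{W₂}(v,x)w₂ + F(v,x)w₁, Y_{W₁}(v,x)w₁)`,
`d_U = d_{W₂} ⊞ d_{W₁}`, `D_U = D_{W₂} ⊞ D_{W₁}`. -/
def prodData {V W1 W2 : Type} [AddCommGroup V] [Module ℂ V] [AddCommGroup W1]
    [Module ℂ W1] [AddCommGroup W2] [Module ℂ W2]
    (d1 : LModData V W1) (d2 : LModData V W2) (F : V → HNFam W1 W2) :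
    LModData V (W2 × W1) where
  Y v u n := (d2.Y v u.1 n + F v (-n - 1) u.2, d1.Y v u.2 n)
  dW u := (d2.dW u.1, d1.dW u.2)
  DW u := (d2.DW u.1, d1.DW u.2)
  grading m := (d2.grading m).prod (d1.grading m)

/-!
The vacuum-like element `φ₋₁` has weight `0` and satisfies the `D`-derivative property, so it
commutes with the operators `d` and `D`; hence the shear `(w₂, w₁) ↦ (w₂ + φ₋₁ w₁, w₁)`
intertwines the `d` and `D` operators of the two extensions. On vertex operators the shear
changes the `W₂`-component by `Y_{W₂}(v,x)φ₋₁ - φ₋₁Y_{W₁}(v,x)`, which is exactly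
`F⁽¹⁾ - F⁽²⁾`.
-/

theorem LinearMap.ext_of_iSup_eq_top {R M M' ι : Type*} [Semiring R] [AddCommMonoid M]
    [Module R M] [AddCommMonoid M'] [Module R M'] {p : ι → Submodule R M} (hp : iSup p = ⊤)
    {f g : M →ₗ[R] M'} (h : ∀ i, ∀ x ∈ p i, f x = g x) : f = g := by
  have hle : (⊤ : Submodule R M) ≤ LinearMap.eqLocus f g :=
    hp ▸ iSup_le fun i x hx => h i x hx
  exact LinearMap.ext fun x => hle Submodule.mem_top

def shear {G H : Type*} [Add G] (θ : H → G) (u : G × H) : G × H :=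
  (u.1 + θ u.2, u.2)

theorem shear_bijective {G H : Type*} [AddGroup G] (θ : H → G) :
    Function.Bijective (shear θ) :=
  Function.bijective_iff_has_inverse.mpr
    ⟨fun u => (u.1 - θ u.2, u.2), fun u => by simp [shear], fun u => by simp [shear]⟩

theorem isLinearMap_shear {R G H : Type*} [Semiring R] [AddCommMonoid G] [Module R G]
    [AddCommMonoid H] [Module R H] {θ : H → G} (hθ : IsLinearMap R θ) :
    IsLinearMap R (shear θ) where
  map_add u u' := Prod.ext (by simp only [shear, Prod.fst_add, Prod.snd_add, hθ.map_add]; abel) rfl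
  map_smul c u := Prod.ext (by simp [shear, hθ.map_smul, smul_add]) rfl

section ConstFam

variable {V W1 W2 : Type} [AddCommGroup V] [Module ℂ V] [AddCommGroup W1] [Module ℂ W1]
  [AddCommGroup W2] [Module ℂ W2] {A : MOSVA V} {d1 : LModData V W1} {d2 : LModData V W2}
  {N n : ℤ} {θ : W1 → W2}

theorem IsHNhomog.DW_comm_of_constFam (hθ : IsHNhomog A d1 d2 N n (constFam θ)) (w : W1) :
    d2.DW (θ w) = θ (d1.DW w) := by
  have h := hθ.D_prop 0 w
  simp only [constFam, zero_add, Int.cast_one, one_smul, one_ne_zero, if_true] at h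
  exact sub_eq_zero.mp h.symm

theorem IsHNhomog.dW_comm_of_constFam (h1 : IsLMod A d1) (h2 : IsLMod A d2)
    (hlin : IsLinearMap ℂ θ) (hθ : IsHNhomog A d1 d2 N n (constFam θ)) (w : W1) :
    d2.dW (θ w) = θ (d1.dW w) + (n : ℂ) • θ w := by
  let Θ := hlin.mk' θ
  have hext : (h2.d_linear.mk' _).comp Θ = Θ.comp (h1.d_linear.mk' _) + (n : ℂ) • Θ := by
    refine LinearMap.ext_of_iSup_eq_top h1.grading_sup fun μ x hx => ?_
    have hθx : θ x ∈ d2.grading (μ + n) := by simpa [constFam] using hθ.wt_mem μ x hx 0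
    simp [Θ, h2.d_eigen _ _ hθx, h1.d_eigen _ _ hx, add_smul]
  exact LinearMap.congr_fun hext w

end ConstFam

theorem isHomData_prodData_shear {V W1 W2 : Type} [AddCommGroup V] [Module ℂ V]
    [AddCommGroup W1] [Module ℂ W1] [AddCommGroup W2] [Module ℂ W2] {A : MOSVA V}
    {d1 : LModData V W1} {d2 : LModData V W2} (h2 : IsLMod A d2) {F1 F2 : V → HNFam W1 W2}
    {θ : W1 → W2} (hlin : IsLinearMap ℂ θ) (hdW : ∀ w, d2.dW (θ w) = θ (d1.dW w))
    (hDW : ∀ w, d2.DW (θ w) = θ (d1.DW w))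
    (hdiff : ∀ v k w, F1 v k w - F2 v k w = innerFam d1 d2 θ v k w) :
    IsHomData A (prodData d1 d2 F1) (prodData d1 d2 F2) (shear θ) := by
  refine ⟨isLinearMap_shear hlin, fun u => ?_, fun u => ?_, fun v u n => ?_⟩
  · exact Prod.ext (by simp [shear, prodData, h2.d_linear.map_add, hdW]) rfl
  · exact Prod.ext (by simp [shear, prodData, h2.D_linear.map_add, hDW]) rfl
  · have h := hdiff v (-n - 1) u.2
    rw [innerFam, show -(-n - 1) - 1 = n by ring, sub_eq_iff_eq_add'] at h
    refine Prod.ext ?_ rfl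
    simp only [shear, prodData, h2.Y_add_right, h]
    abel

theorem inner_difference_gives_equivalent_extensions_general
    {V W1 W2 : Type}
    [AddCommGroup V] [Module ℂ V] [AddCommGroup W1] [Module ℂ W1]
    [AddCommGroup W2] [Module ℂ W2]
    (A : MOSVA V) (M1 : LMod A W1) (M2 : LMod A W2) (N : ℤ)
    (F1 F2 : V → HNFam W1 W2)
    (φneg : W1 → W2) (hφlin : IsLinearMap ℂ φneg)
    (hvac : IsHN A M1.toLModData M2.toLModData N (constFam φneg) ∧
      IsHNhomog A M1.toLModData M2.toLModData N 0 (constFam φneg))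
    -- `F⁽¹⁾ - F⁽²⁾` is the inner derivation attached to `φ₋₁`
    (hdiff : ∀ (v : V) (k : ℤ) (w1 : W1),
      F1 v k w1 - F2 v k w1 = innerFam M1.toLModData M2.toLModData φneg v k w1) :
    -- `T(w₂,w₁) = (w₂ + φ₋₁ w₁, w₁)` is an isomorphism of the two extensions:
    Function.Bijective (fun u : W2 × W1 => ((u.1 + φneg u.2, u.2) : W2 × W1)) ∧
    IsHomData A (prodData M1.toLModData M2.toLModData F1)
        (prodData M1.toLModData M2.toLModData F2)
        (fun u : W2 × W1 => ((u.1 + φneg u.2, u.2) : W2 × W1)) ∧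
    -- `T` commutes with the inclusions of `W₂` and the projections to `W₁`
    (∀ w2 : W2, (fun u : W2 × W1 => ((u.1 + φneg u.2, u.2) : W2 × W1)) (w2, 0) = (w2, 0)) ∧
    (∀ u : W2 × W1, ((u.1 + φneg u.2, u.2) : W2 × W1).2 = u.2) := by
  obtain ⟨-, hθ⟩ := hvac
  have hdW (w : W1) : M2.dW (φneg w) = φneg (M1.dW w) := by
    simpa using hθ.dW_comm_of_constFam M1.prop M2.prop hφlin w
  refine ⟨shear_bijective φneg,
    isHomData_prodData_shear M2.prop hφlin hdW hθ.DW_comm_of_constFam hdiff, fun w2 => ?_,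
    fun _ => rfl⟩
  simp [hφlin.map_zero]

/-- Proposition 3.13 of the paper.
Let `F⁽¹⁾, F⁽²⁾ : V → H_N(W₁,W₂)` be two derivations that differ by an inner
derivation, say `F⁽¹⁾(v,ζ) - F⁽²⁾(v,ζ) = Y_{W₂}(v,ζ)φ₋₁ - φ₋₁Y_{W₁}(v,ζ)` with `φ₋₁`
the linear map attached to a vacuum-like element of `H_N(W₁,W₂)`.  Then the
extensions `U⁽¹⁾`, `U⁽²⁾` constructed from `F⁽¹⁾`, `F⁽²⁾` are equivalent; explicitly,
`T(w₂,w₁) = (w₂ + φ₋₁(w₁), w₁)` is a `V`-module isomorphism `U⁽¹⁾ → U⁽²⁾` commuting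
with the two exact sequences. -/
theorem inner_difference_gives_equivalent_extensions
    {V W1 W2 : Type}
    [AddCommGroup V] [Module ℂ V] [AddCommGroup W1] [Module ℂ W1]
    [AddCommGroup W2] [Module ℂ W2]
    (A : MOSVA V) (M1 : LMod A W1) (M2 : LMod A W2) (N : ℤ)
    (F1 F2 : V → HNFam W1 W2)
    (hF1 : IsHNDerivFull A M1.toLModData M2.toLModData N F1)
    (hF2 : IsHNDerivFull A M1.toLModData M2.toLModData N F2)
    (φneg : W1 → W2) (hφlin : IsLinearMap ℂ φneg)
    (hvac : IsHN A M1.toLModData M2.toLModData N (constFam φneg) ∧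
      IsHNhomog A M1.toLModData M2.toLModData N 0 (constFam φneg))
    -- `F⁽¹⁾ - F⁽²⁾` is the inner derivation attached to `φ₋₁`
    (hdiff : ∀ (v : V) (k : ℤ) (w1 : W1),
      F1 v k w1 - F2 v k w1 = innerFam M1.toLModData M2.toLModData φneg v k w1) :
    -- `T(w₂,w₁) = (w₂ + φ₋₁ w₁, w₁)` is an isomorphism of the two extensions:
    Function.Bijective (fun u : W2 × W1 => ((u.1 + φneg u.2, u.2) : W2 × W1)) ∧
    IsHomData A (prodData M1.toLModData M2.toLModData F1)
        (prodData M1.toLModData M2.toLModData F2)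
        (fun u : W2 × W1 => ((u.1 + φneg u.2, u.2) : W2 × W1)) ∧
    -- `T` commutes with the inclusions of `W₂` and the projections to `W₁`
    (∀ w2 : W2, (fun u : W2 × W1 => ((u.1 + φneg u.2, u.2) : W2 × W1)) (w2, 0) = (w2, 0)) ∧
    (∀ u : W2 × W1, ((u.1 + φneg u.2, u.2) : W2 × W1).2 = u.2) :=
  inner_difference_gives_equivalent_extensions_general A M1 M2 N F1 F2 φneg hφlin hvac hdiff
end
end

section
/- Let Vir be the Virasoro algebra and W = M(c,h) a Verma module, with every w ∈ W written in its standard expression and Ind(w) its index. Then: (1) for every m ≥ 2 and w ∈ W, Ind(L(-m)w) = Ind(w); (2) for fixed n ∈ ℤ_+ and n_1,…,n_s ≥ 2 (not necessarily decreasing), Ind(L(m)L(-n_1)⋯L(-n_s)L(-1)^n 1_{c,h}) ≤ n+1 for all m ∈ ℤ, with equality for only finitely many m; moreover, among integers m ≥ −1, only finitely many satisfy Ind(L(m)L(-n_1)⋯L(-n_s)L(-1)^n 1_{c,h}) ≥ n. -/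
open scoped BigOperators

noncomputable section

/-- A representation of the Virasoro algebra on a `ℂ`-vector space `M`, with the
central element `k` acting by the scalar `cc`. -/
structure VirRep (M : Type) [AddCommGroup M] [Module ℂ M] : Type where
  L : ℤ → M → M
  cc : ℂ
  L_linear : ∀ n : ℤ, IsLinearMap ℂ (L n)
  comm : ∀ (m n : ℤ) (x : M),
    L m (L n x) - L n (L m x) =
      ((m - n : ℤ) : ℂ) • L (m + n) x +
        (if m + n = 0 then ((m ^ 3 - m : ℤ) : ℂ) / 12 * cc else 0) • x

/-- Index of the standard PBW monomials `L(-p₁)⋯L(-p_t)L(-1)^q 𝟙` of a Verma module: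
a weakly decreasing list of integers `≥ 2` together with the exponent `q` of `L(-1)`. -/
def VirIdx : Type := {l : List ℕ // l.Chain' (· ≥ ·) ∧ ∀ a ∈ l, 2 ≤ a} × ℕ

/-- The level of a monomial index. -/
def VirIdx.level (i : VirIdx) : ℕ := i.1.1.sum + i.2

/-- The monomial index of `L(-1)^q 𝟙`. -/
def VirIdx.pure (q : ℕ) : VirIdx := (⟨[], List.isChain_nil, by simp⟩, q)

/-- The monomial `L(-p₁)⋯L(-p_t)L(-1)^q v`. -/
def VirRep.monomial {M : Type} [AddCommGroup M] [Module ℂ M] (R : VirRep M) (v : M)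
    (i : VirIdx) : M :=
  i.1.1.foldr (fun a acc => R.L (-(a : ℤ)) acc) ((fun x => R.L (-1) x)^[i.2] v)

/-- The Verma module `M(c,h)` for the Virasoro algebra: a representation with central
charge `c` and a highest-weight vector `hw` of weight `h` annihilated by the positive
part, such that the standard monomials form a basis. -/
structure VirVerma (M : Type) [AddCommGroup M] [Module ℂ M] (c h : ℂ)
    extends VirRep M : Type where
  cc_eq : cc = c
  hw : M
  hw_L0 : L 0 hw = h • hw
  hw_sing : ∀ n : ℤ, 0 < n → L n hw = 0
  bas : Module.Basis VirIdx ℂ M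
  bas_eq : ∀ i : VirIdx, bas i = toVirRep.monomial hw i

/-- The index `Ind(w)` of `w` (Definition 5.3 of the paper): the largest exponent `q`
of `L(-1)` occurring in the standard expression of `w`, with `Ind 0 = -1`. -/
def VirVerma.Ind {M : Type} [AddCommGroup M] [Module ℂ M] {c h : ℂ}
    (Vm : VirVerma M c h) (w : M) : ℤ :=
  WithBot.unbotD (-1) (((Vm.bas.repr w).support.image (fun i : VirIdx => (i.2 : ℤ))).max)

/-- A singular vector: annihilated by `L(n)` for all `n > 0`. -/
def IsSingular {M : Type} [AddCommGroup M] [Module ℂ M] (R : VirRep M) (w : M) : Prop :=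
  ∀ n : ℤ, 0 < n → R.L n w = 0

/-- Stability of a subspace under the Virasoro action. -/
def VirInvariant {M : Type} [AddCommGroup M] [Module ℂ M] (R : VirRep M)
    (S : Submodule ℂ M) : Prop :=
  ∀ (n : ℤ) (x : M), x ∈ S → R.L n x ∈ S

/-- The Vir-submodule generated by a subset. -/
def VirGen {M : Type} [AddCommGroup M] [Module ℂ M] (R : VirRep M) (s : Set M) :
    Submodule ℂ M :=
  sInf {U : Submodule ℂ M | VirInvariant R U ∧ s ⊆ U}

/-!
Let `F q` be the span of the standard monomials containing at most `q` factors `L(-1)`, so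
that `Ind w ≤ q ↔ w ∈ F q`. Straightening a monomial with `[L(-a), L(-b)] = (b - a) L(-a-b)`
(`a, b ≥ 2`) only creates monomials with the same power of `L(-1)` and fewer factors; hence
`L(-m)` preserves `F q` for `m ≥ 2`, and commuting `L(m)` through the factors shows that every
`L(m)` maps `F q` into `F (q + 1)`. For `Ind (L(-m) w) ≥ Ind w`, pick among the monomials of `w`
of top index one with the most factors: its image under `L(-m)` has a leading standard monomial
that no other term of `w` produces. Finally, `L(m)` kills every monomial of level below `m`,
so only finitely many `m ≥ -1` can give index `≥ n`, while `Ind (L(m) w) = n` for `m ≤ -2`.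
-/

open Submodule

def ascendingPairs : List ℕ → ℕ
  | [] => 0
  | x :: xs => xs.countP (fun y => x < y) + ascendingPairs xs

theorem ascendingPairs_swap_lt (u w : List ℕ) {a b : ℕ} (hab : a < b) :
    ascendingPairs (u ++ b :: a :: w) < ascendingPairs (u ++ a :: b :: w) := by
  induction u with
  | nil =>
    simp only [List.nil_append, ascendingPairs, hab.not_gt, decide_false, Bool.false_eq_true,
      not_false_eq_true, List.countP_cons_of_neg, hab, decide_true, List.countP_cons_of_pos]
    omega
  | cons x u ih =>
    simp only [List.cons_append, ascendingPairs,
      ((List.Perm.swap a b w).append_left u).countP_eq]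
    omega

namespace VirIdx

def ofList (l : List ℕ) (hl : ∀ a ∈ l, 2 ≤ a) (q : ℕ) : VirIdx :=
  (⟨(l : Multiset ℕ).sort (· ≥ ·), List.isChain_iff_pairwise.mpr (Multiset.pairwise_sort _ _),
    fun a ha => hl a (by simpa using ha)⟩, q)

theorem length_ofList (l : List ℕ) (hl : ∀ a ∈ l, 2 ≤ a) (q : ℕ) :
    (ofList l hl q).1.1.length = l.length := by
  simp [ofList]

theorem ofList_congr {l l' : List ℕ} (hp : l.Perm l') (hl : ∀ a ∈ l, 2 ≤ a)
    (hl' : ∀ a ∈ l', 2 ≤ a) (q : ℕ) : ofList l hl q = ofList l' hl' q :=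
  Prod.ext (Subtype.ext (congrArg (Multiset.sort · (· ≥ ·)) (Multiset.coe_eq_coe.mpr hp))) rfl

theorem ofList_of_isChain {l : List ℕ} (hc : l.IsChain (· ≥ ·)) (hl : ∀ a ∈ l, 2 ≤ a)
    (q : ℕ) : ofList l hl q = (⟨l, hc, hl⟩, q) := by
  refine Prod.ext (Subtype.ext ?_) rfl
  show (l : Multiset ℕ).sort (· ≥ ·) = l
  exact (Multiset.coe_eq_coe.mp (Multiset.sort_eq (l : Multiset ℕ) (· ≥ ·))).eq_of_pairwise'
    (Multiset.pairwise_sort _ _) (List.isChain_iff_pairwise.mp hc)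

def insert (a : ℕ) (ha : 2 ≤ a) (i : VirIdx) : VirIdx :=
  ofList (a :: i.1.1) (List.forall_mem_cons.mpr ⟨ha, i.1.2.2⟩) i.2

theorem length_insert {a : ℕ} (ha : 2 ≤ a) (i : VirIdx) :
    (insert a ha i).1.1.length = i.1.1.length + 1 :=
  length_ofList _ _ _

theorem insert_injective {a : ℕ} (ha : 2 ≤ a) : Function.Injective (insert a ha) := by
  intro i j h
  have hs : a ::ₘ (i.1.1 : Multiset ℕ) = a ::ₘ (j.1.1 : Multiset ℕ) := by
    simpa only [insert, ofList, Multiset.sort_eq, ← Multiset.cons_coe] using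
      congrArg (fun k : VirIdx => (k.1.1 : Multiset ℕ)) h
  have hp : i.1.1.Perm j.1.1 := Multiset.coe_eq_coe.mp ((Multiset.cons_inj_right a).mp hs)
  exact Prod.ext (Subtype.ext (hp.eq_of_pairwise' (List.isChain_iff_pairwise.mp i.1.2.1)
    (List.isChain_iff_pairwise.mp j.1.2.1))) (congrArg Prod.snd h :)

end VirIdx

namespace VirRep

variable {M : Type} [AddCommGroup M] [Module ℂ M] (R : VirRep M)

def Lₗ (n : ℤ) : M →ₗ[ℂ] M := IsLinearMap.mk' (R.L n) (R.L_linear n)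

@[simp]
theorem Lₗ_apply (n : ℤ) (x : M) : R.Lₗ n x = R.L n x := rfl

@[simp]
theorem L_add (n : ℤ) (x y : M) : R.L n (x + y) = R.L n x + R.L n y := (R.Lₗ n).map_add x y

@[simp]
theorem L_smul (n : ℤ) (a : ℂ) (x : M) : R.L n (a • x) = a • R.L n x := (R.Lₗ n).map_smul a x

@[simp]
theorem L_zero (n : ℤ) : R.L n 0 = 0 := (R.Lₗ n).map_zero

theorem L_L (m n : ℤ) (x : M) :
    R.L m (R.L n x) = R.L n (R.L m x) + ((m - n : ℤ) : ℂ) • R.L (m + n) x +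
      (if m + n = 0 then ((m ^ 3 - m : ℤ) : ℂ) / 12 * R.cc else 0) • x := by
  rw [add_assoc, ← R.comm]
  abel

theorem L_L_of_add_ne_zero {m n : ℤ} (h : m + n ≠ 0) (x : M) :
    R.L m (R.L n x) = R.L n (R.L m x) + ((m - n : ℤ) : ℂ) • R.L (m + n) x := by
  simpa [h] using R.L_L m n x

variable (v : M)

def listMonomial (l : List ℕ) (q : ℕ) : M :=
  l.foldr (fun (a : ℕ) acc => R.L (-(a : ℤ)) acc) ((fun x => R.L (-1) x)^[q] v)

@[simp]
theorem listMonomial_cons (a : ℕ) (l : List ℕ) (q : ℕ) :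
    R.listMonomial v (a :: l) q = R.L (-(a : ℤ)) (R.listMonomial v l q) := rfl

theorem listMonomial_nil_zero : R.listMonomial v [] 0 = v := rfl

theorem listMonomial_nil_succ (q : ℕ) :
    R.listMonomial v [] (q + 1) = R.L (-1) (R.listMonomial v [] q) :=
  Function.iterate_succ_apply' _ q v

/- Not `rfl`: `monomial` folds over the coercion of `i.1.1` to a `List ℤ`. -/
theorem monomial_eq_listMonomial (i : VirIdx) :
    R.monomial v i = R.listMonomial v i.1.1 i.2 := by
  unfold VirRep.monomial listMonomial
  induction i.1.1 with
  | nil => rfl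
  | cons a l ih => exact congrArg (R.L (-(a : ℤ))) ih

theorem listMonomial_swap (u : List ℕ) {a : ℕ} (b : ℕ) (w : List ℕ) (q : ℕ) (ha : 0 < a) :
    R.listMonomial v (u ++ a :: b :: w) q = R.listMonomial v (u ++ b :: a :: w) q +
      ((b - a : ℤ) : ℂ) • R.listMonomial v (u ++ (a + b) :: w) q := by
  induction u with
  | nil =>
    simp only [List.nil_append, listMonomial_cons]
    rw [R.L_L_of_add_ne_zero (by omega)]
    congr 3 <;> push_cast <;> ring
  | cons x u ih => simp only [List.cons_append, listMonomial_cons, ih, L_add, L_smul]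

def indexFiltration (q : ℤ) : Submodule ℂ M :=
  span ℂ (R.monomial v '' {i | (i.2 : ℤ) ≤ q})

def shorterSpan (q t : ℕ) : Submodule ℂ M :=
  span ℂ (R.monomial v '' {i | i.2 = q ∧ i.1.1.length < t})

variable {R v}

theorem indexFiltration_mono {q q' : ℤ} (h : q ≤ q') :
    R.indexFiltration v q ≤ R.indexFiltration v q' :=
  span_mono (Set.image_mono fun _ hi => le_trans hi h)

theorem monomial_mem_indexFiltration {i : VirIdx} {q : ℤ} (hi : (i.2 : ℤ) ≤ q) :
    R.monomial v i ∈ R.indexFiltration v q :=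
  subset_span ⟨i, hi, rfl⟩

theorem shorterSpan_mono {q t t' : ℕ} (h : t ≤ t') : R.shorterSpan v q t ≤ R.shorterSpan v q t' :=
  span_mono (Set.image_mono fun _ hi => ⟨hi.1, lt_of_lt_of_le hi.2 h⟩)

theorem shorterSpan_le_indexFiltration {q t : ℕ} :
    R.shorterSpan v q t ≤ R.indexFiltration v q :=
  span_mono (Set.image_mono fun _ hi => (congrArg (fun n : ℕ => (n : ℤ)) hi.1).le)

theorem L_mem_of_forall_monomial {s : Set VirIdx} {S : Submodule ℂ M} {n : ℤ}
    (h : ∀ i ∈ s, R.L n (R.monomial v i) ∈ S) {x : M} (hx : x ∈ span ℂ (R.monomial v '' s)) :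
    R.L n x ∈ S := by
  have : span ℂ (R.monomial v '' s) ≤ S.comap (R.Lₗ n) :=
    span_le.mpr (by rintro _ ⟨i, hi, rfl⟩; exact h i hi)
  exact this hx

theorem listMonomial_sub_monomial_ofList_mem (l : List ℕ) (hl : ∀ a ∈ l, 2 ≤ a) (q : ℕ) :
    R.listMonomial v l q - R.monomial v (VirIdx.ofList l hl q) ∈ R.shorterSpan v q l.length := by
  by_cases hc : l.IsChain (· ≥ ·)
  · have h : R.monomial v (VirIdx.ofList l hl q) = R.listMonomial v l q := by
      rw [VirIdx.ofList_of_isChain hc]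
      exact R.monomial_eq_listMonomial v _
    rw [h, sub_self]
    exact zero_mem _
  obtain ⟨a, b, ⟨u, w, rfl⟩, hab⟩ : ∃ a b, (∃ u w, l = u ++ a :: b :: w) ∧ a < b := by
    simpa [List.isChain_iff_forall_rel_of_append_cons_cons] using hc
  have hl_swap : ∀ x ∈ u ++ b :: a :: w, 2 ≤ x := fun x hx =>
    hl x (by simp only [List.mem_append, List.mem_cons] at hx ⊢; tauto)
  have hl_merge : ∀ x ∈ u ++ (a + b) :: w, 2 ≤ x := by
    intro x hx
    simp only [List.mem_append, List.mem_cons] at hx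
    rcases hx with hx | rfl | hx
    · exact hl x (by simp [hx])
    · have := hl a (by simp); omega
    · exact hl x (by simp [hx])
  have hswap := listMonomial_sub_monomial_ofList_mem (u ++ b :: a :: w) hl_swap q
  have hmerge := listMonomial_sub_monomial_ofList_mem (u ++ (a + b) :: w) hl_merge q
  rw [VirIdx.ofList_congr ((List.Perm.swap a b w).append_left u) hl_swap hl] at hswap
  rw [R.listMonomial_swap v u b w q (by have := hl a (by simp); omega), add_sub_right_comm]
  refine add_mem (shorterSpan_mono (by simp) hswap) (smul_mem _ _ ?_)
  rw [← sub_add_cancel (R.listMonomial v _ q) (R.monomial v (VirIdx.ofList _ hl_merge q))]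
  refine add_mem (shorterSpan_mono (by simp) hmerge) (subset_span ⟨_, ⟨rfl, ?_⟩, rfl⟩)
  rw [VirIdx.length_ofList]
  simp
termination_by (l.length, ascendingPairs l)
decreasing_by
  all_goals subst_vars; simp only [List.length_append, List.length_cons]
  · exact Prod.Lex.right _ (ascendingPairs_swap_lt u w hab)
  · exact Prod.Lex.left _ _ (by omega)

theorem listMonomial_mem_indexFiltration {l : List ℕ} (hl : ∀ a ∈ l, 2 ≤ a) {q : ℕ} {q' : ℤ}
    (hq : (q : ℤ) ≤ q') : R.listMonomial v l q ∈ R.indexFiltration v q' := by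
  rw [← sub_add_cancel (R.listMonomial v l q) (R.monomial v (VirIdx.ofList l hl q))]
  exact add_mem (indexFiltration_mono hq (shorterSpan_le_indexFiltration
    (listMonomial_sub_monomial_ofList_mem l hl q))) (monomial_mem_indexFiltration hq)

theorem L_neg_mem_indexFiltration {a : ℕ} (ha : 2 ≤ a) {q : ℤ} {x : M}
    (hx : x ∈ R.indexFiltration v q) : R.L (-(a : ℤ)) x ∈ R.indexFiltration v q :=
  L_mem_of_forall_monomial (fun i hi => by
    rw [monomial_eq_listMonomial, ← listMonomial_cons]
    exact listMonomial_mem_indexFiltration (List.forall_mem_cons.mpr ⟨ha, i.1.2.2⟩) hi) hx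

theorem L_neg_one_listMonomial_mem {l : List ℕ} (hl : ∀ a ∈ l, 2 ≤ a) (q : ℕ) :
    R.L (-1) (R.listMonomial v l q) ∈ R.indexFiltration v (q + 1) := by
  induction l with
  | nil =>
    rw [← listMonomial_nil_succ]
    exact listMonomial_mem_indexFiltration (by simp) (by simp)
  | cons a l ih =>
    obtain ⟨ha, hl⟩ := List.forall_mem_cons.mp hl
    rw [listMonomial_cons, R.L_L_of_add_ne_zero (by omega)]
    refine add_mem (L_neg_mem_indexFiltration ha (ih hl)) (smul_mem _ _ ?_)
    have hsum : -1 + -(a : ℤ) = -((a + 1 : ℕ) : ℤ) := by push_cast; ring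
    rw [hsum, ← listMonomial_cons]
    exact listMonomial_mem_indexFiltration (List.forall_mem_cons.mpr ⟨by omega, hl⟩) (by omega)

theorem L_neg_one_mem_indexFiltration {q : ℤ} {x : M} (hx : x ∈ R.indexFiltration v q) :
    R.L (-1) x ∈ R.indexFiltration v (q + 1) :=
  L_mem_of_forall_monomial (fun i hi => by
    rw [monomial_eq_listMonomial]
    exact indexFiltration_mono (by simpa using hi) (L_neg_one_listMonomial_mem i.1.2.2 i.2)) hx

theorem L_mem_indexFiltration_of_neg {m : ℤ} (hm : m < 0) {q : ℤ} {x : M}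
    (hx : x ∈ R.indexFiltration v q) : R.L m x ∈ R.indexFiltration v (q + 1) := by
  obtain rfl | hm := (Int.le_sub_one_of_lt hm).eq_or_lt
  · exact L_neg_one_mem_indexFiltration hx
  · lift -m to ℕ using (by omega) with a ha
    rw [show m = -(a : ℤ) by omega]
    exact indexFiltration_mono (by omega) (L_neg_mem_indexFiltration (by omega) hx)

variable {h : ℂ}

theorem L_listMonomial_mem_indexFiltration (hv₀ : R.L 0 v = h • v) (hv : IsSingular R v)
    {l : List ℕ} (hl : ∀ a ∈ l, 2 ≤ a) (q : ℕ) (m : ℤ) :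
    R.L m (R.listMonomial v l q) ∈ R.indexFiltration v (q + 1) := by
  have hmem : ∀ {l : List ℕ}, (∀ a ∈ l, 2 ≤ a) → ∀ q : ℕ,
      R.listMonomial v l q ∈ R.indexFiltration v (q + 1) :=
    fun hl q => listMonomial_mem_indexFiltration hl (by omega)
  induction l generalizing m with
  | nil =>
    induction q generalizing m with
    | zero =>
      rcases lt_or_ge m 0 with hm | hm
      · exact L_mem_indexFiltration_of_neg hm (listMonomial_mem_indexFiltration hl le_rfl)
      obtain rfl | hm := hm.eq_or_lt
      · rw [listMonomial_nil_zero, hv₀]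
        exact smul_mem _ _ (hmem hl 0)
      · rw [listMonomial_nil_zero, hv m hm]
        exact zero_mem _
    | succ q ih =>
      rw [listMonomial_nil_succ, R.L_L, Nat.cast_succ]
      exact add_mem (add_mem (L_neg_one_mem_indexFiltration (ih m))
        (smul_mem _ _ (indexFiltration_mono (by omega) (ih _))))
        (smul_mem _ _ (indexFiltration_mono (by omega) (hmem hl q)))
  | cons a l ih =>
    obtain ⟨ha, hl⟩ := List.forall_mem_cons.mp hl
    rw [listMonomial_cons, R.L_L]
    exact add_mem (add_mem (L_neg_mem_indexFiltration ha (ih hl m)) (smul_mem _ _ (ih hl _)))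
      (smul_mem _ _ (hmem hl q))

theorem L_mem_indexFiltration (hv₀ : R.L 0 v = h • v) (hv : IsSingular R v) (m : ℤ) {q : ℤ}
    {x : M} (hx : x ∈ R.indexFiltration v q) : R.L m x ∈ R.indexFiltration v (q + 1) :=
  L_mem_of_forall_monomial (fun i hi => by
    rw [monomial_eq_listMonomial]
    exact indexFiltration_mono (by simpa using hi)
      (L_listMonomial_mem_indexFiltration hv₀ hv i.1.2.2 i.2 m)) hx

theorem L_listMonomial_eq_zero (hv : IsSingular R v) (l : List ℕ) (q : ℕ) {m : ℤ}
    (hm : ((l.sum + q : ℕ) : ℤ) < m) : R.L m (R.listMonomial v l q) = 0 := by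
  induction l generalizing m with
  | nil =>
    induction q generalizing m with
    | zero => exact hv m (by simpa using hm)
    | succ q ih =>
      simp only [List.sum_nil, zero_add, Nat.cast_add, Nat.cast_one] at hm ih
      rw [listMonomial_nil_succ, R.L_L_of_add_ne_zero (by omega), ih (by omega), ih (by omega)]
      simp
  | cons a l ih =>
    simp only [List.sum_cons, Nat.cast_add] at hm ih
    rw [listMonomial_cons, R.L_L_of_add_ne_zero (by omega), ih (by omega), ih (by omega)]
    simp

end VirRep

theorem Module.Basis.repr_map_apply {ι R M : Type*} [Semiring R] [AddCommMonoid M]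
    [Module R M] (b : Module.Basis ι R M) (f : M →ₗ[R] M) (x : M) (j : ι) :
    b.repr (f x) j = (b.repr x).sum fun i c => c * b.repr (f (b i)) j := by
  conv_lhs => rw [← b.linearCombination_repr x]
  simp [Finsupp.linearCombination_apply, map_finsuppSum, Finsupp.sum_apply]

namespace VirVerma

variable {M : Type} [AddCommGroup M] [Module ℂ M] {c h : ℂ} (Vm : VirVerma M c h)

theorem coe_bas : ⇑Vm.bas = Vm.toVirRep.monomial Vm.hw := funext Vm.bas_eq

theorem neg_one_le_Ind (w : M) : -1 ≤ Vm.Ind w := by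
  unfold Ind
  cases hmax : ((Vm.bas.repr w).support.image fun i : VirIdx => (i.2 : ℤ)).max with
  | bot => simp
  | coe q =>
    obtain ⟨i, -, rfl⟩ := Finset.mem_image.mp (Finset.mem_of_max hmax)
    simp only [WithBot.unbotD_coe]
    omega

theorem Ind_le_iff {q : ℤ} (hq : -1 ≤ q) {w : M} :
    Vm.Ind w ≤ q ↔ ∀ i ∈ (Vm.bas.repr w).support, (i.2 : ℤ) ≤ q := by
  rw [Ind, WithBot.unbotD_le_iff fun _ => hq, Finset.max_le_iff]
  simp

theorem le_Ind {w : M} {i : VirIdx} (hi : i ∈ (Vm.bas.repr w).support) : (i.2 : ℤ) ≤ Vm.Ind w :=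
  (Vm.Ind_le_iff (Vm.neg_one_le_Ind w)).mp le_rfl i hi

theorem Ind_le_iff_mem {q : ℤ} (hq : -1 ≤ q) {w : M} :
    Vm.Ind w ≤ q ↔ w ∈ Vm.toVirRep.indexFiltration Vm.hw q := by
  rw [Vm.Ind_le_iff hq, VirRep.indexFiltration, ← coe_bas, Vm.bas.mem_span_image]
  rfl

theorem Ind_zero : Vm.Ind 0 = -1 := by
  simp [Ind]

theorem Ind_bas (i : VirIdx) : Vm.Ind (Vm.bas i) = i.2 := by
  simp [Ind]

theorem bas_repr_L_neg_bas {a : ℕ} (ha : 2 ≤ a) (i j : VirIdx)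
    (hj : j.2 = i.2 → i.1.1.length < j.1.1.length) :
    Vm.bas.repr (Vm.L (-(a : ℤ)) (Vm.bas i)) j = Finsupp.single (VirIdx.insert a ha i) 1 j := by
  have hs := Vm.toVirRep.listMonomial_sub_monomial_ofList_mem (v := Vm.hw) (a :: i.1.1)
    (List.forall_mem_cons.mpr ⟨ha, i.1.2.2⟩) i.2
  rw [VirRep.shorterSpan, ← coe_bas, Vm.bas.mem_span_image, VirRep.listMonomial_cons,
    ← VirRep.monomial_eq_listMonomial, ← coe_bas] at hs
  have hj' : Vm.bas.repr (Vm.L (-(a : ℤ)) (Vm.bas i) - Vm.bas (VirIdx.insert a ha i)) j = 0 := by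
    by_contra hne
    obtain ⟨hq, hlen⟩ := hs (Finsupp.mem_support_iff.mpr hne)
    have := hj hq
    simp only [List.length_cons, Order.lt_add_one_iff] at hlen
    omega
  rwa [map_sub, Finsupp.sub_apply, sub_eq_zero, Module.Basis.repr_self] at hj'

theorem bas_repr_L_neg_insert {a : ℕ} (ha : 2 ≤ a) {w : M} {i₀ : VirIdx}
    (hmax : ∀ i ∈ (Vm.bas.repr w).support, i.2 = i₀.2 → i.1.1.length ≤ i₀.1.1.length) :
    Vm.bas.repr (Vm.L (-(a : ℤ)) w) (VirIdx.insert a ha i₀) = Vm.bas.repr w i₀ := by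
  rw [← VirRep.Lₗ_apply, Module.Basis.repr_map_apply, Finsupp.sum_eq_single i₀ _ (by simp)]
  · rw [VirRep.Lₗ_apply, bas_repr_L_neg_bas _ ha _ _ (fun _ => by simp [VirIdx.length_insert]),
      Finsupp.single_eq_same, mul_one]
  · intro i hi hne
    have hlen : (VirIdx.insert a ha i₀).2 = i.2 →
        i.1.1.length < (VirIdx.insert a ha i₀).1.1.length := fun hq => by
      have := hmax i (Finsupp.mem_support_iff.mpr hi) hq.symm
      rw [VirIdx.length_insert]
      omega
    rw [VirRep.Lₗ_apply, bas_repr_L_neg_bas _ ha _ _ hlen,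
      Finsupp.single_eq_of_ne ((VirIdx.insert_injective ha).ne hne).symm, mul_zero]

theorem Ind_L_neg {a : ℕ} (ha : 2 ≤ a) (w : M) : Vm.Ind (Vm.L (-(a : ℤ)) w) = Vm.Ind w := by
  have hw := (Vm.Ind_le_iff_mem (Vm.neg_one_le_Ind w)).mp le_rfl
  refine le_antisymm ((Vm.Ind_le_iff_mem (Vm.neg_one_le_Ind w)).mpr
    (VirRep.L_neg_mem_indexFiltration ha hw)) ?_
  rcases (Vm.bas.repr w).support.eq_empty_or_nonempty with h0 | hne
  · exact ((Vm.Ind_le_iff le_rfl).mpr (by simp [h0])).trans (Vm.neg_one_le_Ind _)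
  -- a term of top index with the largest number of factors `L(-b)`, `b ≥ 2`
  obtain ⟨i₀, hi₀, hmax⟩ :=
    Finset.exists_max_image _ (fun i : VirIdx => toLex (i.2, i.1.1.length)) hne
  have hmax' : ∀ i ∈ (Vm.bas.repr w).support,
      i.2 < i₀.2 ∨ i.2 = i₀.2 ∧ i.1.1.length ≤ i₀.1.1.length :=
    fun i hi => by simpa using Prod.Lex.le_iff.mp (hmax i hi)
  have hcoef := Vm.bas_repr_L_neg_insert ha fun i hi hq => ((hmax' i hi).resolve_left hq.not_lt).2
  calc Vm.Ind w ≤ i₀.2 := (Vm.Ind_le_iff (by omega)).mpr fun i hi => by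
        have := hmax' i hi; omega
    _ ≤ Vm.Ind (Vm.L (-(a : ℤ)) w) := Vm.le_Ind (i := VirIdx.insert a ha i₀) (by
        rw [Finsupp.mem_support_iff, hcoef]; exact Finsupp.mem_support_iff.mp hi₀)

theorem Ind_listMonomial {l : List ℕ} (hl : ∀ a ∈ l, 2 ≤ a) (q : ℕ) :
    Vm.Ind (Vm.toVirRep.listMonomial Vm.hw l q) = q := by
  induction l with
  | nil => exact (congrArg Vm.Ind (Vm.bas_eq (VirIdx.pure q))).symm.trans (Vm.Ind_bas _)
  | cons a l ih =>
    obtain ⟨ha, hl⟩ := List.forall_mem_cons.mp hl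
    exact (Vm.Ind_L_neg ha _).trans (ih hl)

end VirVerma

/-- Proposition 5.4 of the paper.
Let `W = M(c,h)` be a Verma module for the Virasoro algebra, with `Ind` the index of
the standard expression.  Then:
(1) for every `m ≥ 2` and `w ∈ W`, `Ind(L(-m)w) = Ind(w)`;
(2) for fixed `n ∈ ℤ₊` and `n₁,…,n_s ≥ 2` (not necessarily decreasing),
`Ind(L(m)L(-n₁)⋯L(-n_s)L(-1)^n 𝟙) ≤ n+1` for all `m ∈ ℤ`, with equality for only
finitely many `m`; moreover among integers `m ≥ -1` only finitely many satisfy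
`Ind(L(m)L(-n₁)⋯L(-n_s)L(-1)^n 𝟙) ≥ n`. -/
theorem virasoro_index_estimates
    {M : Type} [AddCommGroup M] [Module ℂ M] (c h : ℂ) (Vm : VirVerma M c h) :
    (∀ m : ℤ, 2 ≤ m → ∀ w : M, Vm.Ind (Vm.L (-m) w) = Vm.Ind w) ∧
    (∀ n : ℕ, 1 ≤ n → ∀ ns : List ℕ, (∀ a ∈ ns, 2 ≤ a) →
      ∀ w : M, w = ns.foldr (fun (a : ℕ) acc => Vm.L (-(a : ℤ)) acc)
          ((fun x => Vm.L (-1) x)^[n] Vm.hw) →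
        (∀ m : ℤ, Vm.Ind (Vm.L m w) ≤ (n : ℤ) + 1) ∧
        {m : ℤ | Vm.Ind (Vm.L m w) = (n : ℤ) + 1}.Finite ∧
        {m : ℤ | -1 ≤ m ∧ (n : ℤ) ≤ Vm.Ind (Vm.L m w)}.Finite) := by
  refine ⟨fun m hm w => ?_, fun n _ ns hns w hw => ?_⟩
  · lift m to ℕ using (by omega)
    exact Vm.Ind_L_neg (by omega) w
  replace hw : w = Vm.toVirRep.listMonomial Vm.hw ns n := hw
  have hInd_neg : ∀ m : ℤ, m ≤ -2 → Vm.Ind (Vm.L m w) = n := fun m hm => by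
    lift -m to ℕ using (by omega) with a ha
    rw [show m = -(a : ℤ) by omega, Vm.Ind_L_neg (by omega), hw, Vm.Ind_listMonomial hns]
  have hInd_pos : ∀ m : ℤ, ((ns.sum + n : ℕ) : ℤ) < m → Vm.Ind (Vm.L m w) = -1 := fun m hm => by
    rw [hw, VirRep.L_listMonomial_eq_zero Vm.hw_sing ns n hm, Vm.Ind_zero]
  have hfin : {m : ℤ | -1 ≤ m ∧ (n : ℤ) ≤ Vm.Ind (Vm.L m w)}.Finite :=
    (Set.finite_Icc (-1 : ℤ) (ns.sum + n : ℕ)).subset fun m ⟨hm, hInd⟩ =>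
      ⟨hm, not_lt.mp fun hlt => by rw [hInd_pos m hlt] at hInd; omega⟩
  refine ⟨fun m => ?_, hfin.subset fun m hm => ?_, hfin⟩
  · exact (Vm.Ind_le_iff_mem (by omega)).mpr (VirRep.L_mem_indexFiltration Vm.hw_L0 Vm.hw_sing m
      (hw ▸ VirRep.listMonomial_mem_indexFiltration hns le_rfl))
  · have hm : Vm.Ind (Vm.L m w) = n + 1 := hm
    refine ⟨not_lt.mp fun hlt => ?_, by omega⟩
    rw [hInd_neg m (by omega)] at hm
    omega
end
end
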